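/- In the asymptotic regime, for every fixed K ∈ ℝ, the potential-function increments satisfy U_N(⌊𝔞_N + K·σ_N⌋) − U_N(⌊𝔞_N⌋) → K² as N → ∞ (for all sufficiently large N the integer ⌊𝔞_N + K·σ_N⌋ lies in {0, 1, …, N−1}). -/

import Mathlib

open Real Filter Set

/-- Birth rate `λ_n` of the two-type Moran model. -/
noncomputable def lamR (N : ℕ) (s : ℝ) (n : ℕ) : ℝ :=
  (n:ℝ) * ((1/2) * (1 - (n:ℝ)/(N:ℝ)) + s * (1 - (n:ℝ)/(N:ℝ)))

/-- Death rate `μ_n` of the two-type Moran model. -/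
noncomputable def muR (N : ℕ) (m : ℝ) (n : ℕ) : ℝ :=
  (n:ℝ) * ((1/2) * (1 - (n:ℝ)/(N:ℝ)) + m)

/-- Odds-ratio products `r_l = ∏_{i=1}^l μ_i/λ_i`. -/
noncomputable def rR (N : ℕ) (m s : ℝ) (l : ℕ) : ℝ :=
  ∏ i ∈ Finset.Icc 1 l, muR N m i / lamR N s i

/-- Potential `U(n) = ∑_{ℓ=1}^n log(μ_ℓ/λ_ℓ)`. -/
noncomputable def UR (N : ℕ) (m s : ℝ) (n : ℕ) : ℝ :=
  ∑ l ∈ Finset.Icc 1 n, Real.log (muR N m l / lamR N s l)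

/-- `R_k = ∑_{i=0}^{k-1} r_i`. -/
noncomputable def RRk (N : ℕ) (m s : ℝ) (k : ℕ) : ℝ :=
  ∑ i ∈ Finset.range k, rR N m s i

/-- Center of attraction `𝔞 = N(1-ρ)`. -/
noncomputable def aN (N : ℕ) (m s : ℝ) : ℝ := (N:ℝ) * (1 - m/s)

/-- Critical size `𝔠 = 1/(s-m)`. -/
noncomputable def cN (m s : ℝ) : ℝ := 1/(s - m)

/-- `u = N m (1-ρ)²`. -/
noncomputable def uN (N : ℕ) (m s : ℝ) : ℝ := (N:ℝ) * m * (1 - m/s)^2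

/-- Fluctuation scale `σ = (1/s)√(Nm)`. -/
noncomputable def sigN (N : ℕ) (m s : ℝ) : ℝ := (1/s) * Real.sqrt ((N:ℝ) * m)

lemma sum_lin (a : ℝ) (p q : ℕ) (h : p ≤ q) :
    ∑ ℓ ∈ Finset.Icc (p+1) q, ((ℓ:ℝ) - a) =
      (((q:ℝ)-a)^2 - ((p:ℝ)-a)^2 + ((q:ℝ)-(p:ℝ)))/2 := by
  induction q, h using Nat.le_induction with
  | base => simp
  | succ q hq ih =>
    rw [Finset.sum_Icc_succ_top (by omega), ih]
    push_cast; ring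

lemma term_est (N ℓ : ℕ) (m s a ρ D : ℝ)
    (hm : 0 < m) (hms : m < s) (hs : s ≤ 1/2)
    (hℓ1 : 1 ≤ ℓ) (hℓN : ℓ < N)
    (hρ : ρ = m/s) (ha : a = (N:ℝ)*(1-ρ))
    (hx : ρ/2 ≤ 1 - (ℓ:ℝ)/(N:ℝ))
    (hd : |(ℓ:ℝ) - a| ≤ D) :
    |Real.log (muR N m ℓ / lamR N s ℓ) - (2*s/(N:ℝ))*((ℓ:ℝ)-a)/ρ| ≤
      (2*s/(N:ℝ))*D*(2*(2*s+2*D/(N:ℝ))/ρ^2) := by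
  have hs0 : 0 < s := hm.trans hms
  have hρ0 : 0 < ρ := by rw [hρ]; positivity
  have hNn : 0 < N := lt_of_le_of_lt (Nat.zero_le ℓ) hℓN
  have hN0 : 0 < (N:ℝ) := by exact_mod_cast hNn
  have hℓ0 : 0 < (ℓ:ℝ) := by exact_mod_cast hℓ1
  set x : ℝ := 1 - (ℓ:ℝ)/(N:ℝ) with hxdef
  have hx0 : 0 < x := lt_of_lt_of_le (by positivity) hx
  have hx1 : x ≤ 1 := by
    have : 0 ≤ (ℓ:ℝ)/(N:ℝ) := by positivity
    simp only [hxdef]; linarith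
  set num : ℝ := x + 2*m with hnumdef
  set den : ℝ := (1+2*s)*x with hdendef
  have hnum0 : 0 < num := by positivity
  have hden0 : 0 < den := by positivity
  have h1 : muR N m ℓ = (ℓ:ℝ) * num / 2 := by
    rw [muR, hnumdef, hxdef]; ring
  have h2 : lamR N s ℓ = (ℓ:ℝ) * den / 2 := by
    rw [lamR, hdendef, hxdef]; ring
  have hratio : muR N m ℓ / lamR N s ℓ = num / den := by
    rw [h1, h2]
    field_simp
  set d : ℝ := (ℓ:ℝ) - a with hddef
  set w : ℝ := 2*s/(N:ℝ) with hwdef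
  have hw0 : 0 < w := by positivity
  have hnd : num - den = w * d := by
    rw [hnumdef, hdendef, hxdef, hddef, ha, hρ, hwdef]
    field_simp
    ring
  have hD0 : 0 ≤ D := le_trans (abs_nonneg _) hd
  set Fd : ℝ := 2*s + 2*D/(N:ℝ) with hFdef
  have hρx : ρ - x = d/(N:ℝ) := by
    rw [hxdef, hddef, ha]; field_simp; ring
  have hdN : |d|/(N:ℝ) ≤ D/(N:ℝ) := by gcongr
  clear_value Fd w d den num x
  have hnum_near : |ρ - num| ≤ Fd := by
    have : ρ - num = d/(N:ℝ) - 2*m := by rw [hnumdef]; linarith [hρx]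
    rw [this, hFdef]
    calc |d/(N:ℝ) - 2*m| ≤ |d/(N:ℝ)| + |2*m| := abs_sub _ _
      _ = |d|/(N:ℝ) + 2*m := by
          rw [abs_div, abs_of_pos hN0, abs_of_pos (by linarith : (0:ℝ) < 2*m)]
      _ ≤ 2*s + 2*D/(N:ℝ) := by
          have := hdN
          have hDD : 2*D/(N:ℝ) = D/(N:ℝ) + D/(N:ℝ) := by ring
          have : 0 ≤ D/(N:ℝ) := by positivity
          linarith
  have hden_near : |ρ - den| ≤ Fd := by
    have : ρ - den = d/(N:ℝ) - 2*s*x := by rw [hdendef]; linarith [hρx]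
    rw [this, hFdef]
    calc |d/(N:ℝ) - 2*s*x| ≤ |d/(N:ℝ)| + |2*s*x| := abs_sub _ _
      _ = |d|/(N:ℝ) + 2*s*x := by
          rw [abs_div, abs_of_pos hN0, abs_of_pos (by positivity : (0:ℝ) < 2*s*x)]
      _ ≤ 2*s + 2*D/(N:ℝ) := by
          have h1 : 2*s*x ≤ 2*s := by nlinarith
          have hDD : 2*D/(N:ℝ) = D/(N:ℝ) + D/(N:ℝ) := by ring
          have : 0 ≤ D/(N:ℝ) := by positivity
          linarith [hdN]
  have hnum_lb : ρ/2 ≤ num := by rw [hnumdef]; linarith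
  have hden_lb : ρ/2 ≤ den := by
    rw [hdendef]
    have he : (1+2*s)*x = x + 2*(s*x) := by ring
    linarith [mul_pos hs0 hx0]
  have hF0 : 0 ≤ Fd := by rw [hFdef]; positivity
  -- generic bound
  have hb : ∀ e : ℝ, ρ/2 ≤ e → |ρ - e| ≤ Fd →
      |w*d/e - w*d/ρ| ≤ w*D*(2*Fd/ρ^2) := by
    intro e he hne
    have he0 : 0 < e := lt_of_lt_of_le (by positivity) he
    have heq : w*d/e - w*d/ρ = w*d*(ρ-e)/(e*ρ) := by field_simp
    rw [heq, abs_div, abs_mul, abs_mul, abs_of_pos hw0,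
        abs_of_pos (mul_pos he0 hρ0)]
    have hden2 : ρ^2/2 ≤ e*ρ := by
      have h := mul_le_mul_of_nonneg_right he hρ0.le
      have h2 : ρ/2*ρ = ρ^2/2 := by ring
      linarith
    calc w * |d| * |ρ - e| / (e * ρ) ≤ (w*D*Fd)/(ρ^2/2) := by
          gcongr
      _ = w*D*(2*Fd/ρ^2) := by field_simp
  have hub : Real.log (num/den) ≤ w*d/den := by
    have h := Real.log_le_sub_one_of_pos (div_pos hnum0 hden0)
    have : num/den - 1 = (num - den)/den := by field_simp
    rw [this, hnd] at h
    exact h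
  have hlb : w*d/num ≤ Real.log (num/den) := by
    have h := Real.log_le_sub_one_of_pos (div_pos hden0 hnum0)
    have he : Real.log (den/num) = - Real.log (num/den) := by
      rw [← Real.log_inv, inv_div]
    rw [he] at h
    have h2 : den/num - 1 = -((num - den)/num) := by field_simp; ring
    rw [h2, hnd] at h
    linarith
  rw [hratio, abs_le]
  have hbn := hb num hnum_lb hnum_near
  have hbd := hb den hden_lb hden_near
  constructor
  · linarith [neg_abs_le (w*d/num - w*d/ρ)]
  · linarith [le_abs_self (w*d/den - w*d/ρ)]

lemma key (N p q : ℕ) (m s a ρ D : ℝ)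
    (hm : 0 < m) (hms : m < s) (hs : s ≤ 1/2)
    (hpq : p ≤ q) (hqN : q < N)
    (hρ : ρ = m/s) (ha : a = (N:ℝ)*(1-ρ))
    (hx : ∀ ℓ ∈ Finset.Ioc p q, ρ/2 ≤ 1 - (ℓ:ℝ)/(N:ℝ))
    (hd : ∀ ℓ ∈ Finset.Ioc p q, |(ℓ:ℝ) - a| ≤ D) :
    |(∑ ℓ ∈ Finset.Ioc p q, Real.log (muR N m ℓ / lamR N s ℓ))
       - (s/((N:ℝ)*ρ)) * ((((q:ℝ)-a)^2 - ((p:ℝ)-a)^2) + ((q:ℝ)-(p:ℝ)))|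
     ≤ ((q:ℝ)-(p:ℝ)) * ((2*s/(N:ℝ))*D*(2*(2*s+2*D/(N:ℝ))/ρ^2)) := by
  have hs0 : 0 < s := hm.trans hms
  have hρ0 : 0 < ρ := by rw [hρ]; positivity
  have hN0 : 0 < (N:ℝ) := by
    have : 0 < N := lt_of_le_of_lt (Nat.zero_le q) hqN
    exact_mod_cast this
  have hsum1 : (∑ ℓ ∈ Finset.Ioc p q, (2*s/(N:ℝ))*((ℓ:ℝ)-a)/ρ)
      = (s/((N:ℝ)*ρ)) * ((((q:ℝ)-a)^2 - ((p:ℝ)-a)^2) + ((q:ℝ)-(p:ℝ))) := by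
    rw [← Finset.Icc_add_one_left_eq_Ioc]
    calc ∑ ℓ ∈ Finset.Icc (p+1) q, (2*s/(N:ℝ))*((ℓ:ℝ)-a)/ρ
        = ∑ ℓ ∈ Finset.Icc (p+1) q, (2*s/((N:ℝ)*ρ))*((ℓ:ℝ)-a) := by
          refine Finset.sum_congr rfl fun ℓ _ => by ring
      _ = (2*s/((N:ℝ)*ρ)) * ∑ ℓ ∈ Finset.Icc (p+1) q, ((ℓ:ℝ)-a) := by
          rw [Finset.mul_sum]
      _ = (s/((N:ℝ)*ρ)) * ((((q:ℝ)-a)^2 - ((p:ℝ)-a)^2) + ((q:ℝ)-(p:ℝ))) := by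
          rw [sum_lin a p q hpq]; ring
  rw [← hsum1, ← Finset.sum_sub_distrib]
  refine le_trans (Finset.abs_sum_le_sum_abs _ _) ?_
  have hcard : (Finset.Ioc p q).card = q - p := Nat.card_Ioc p q
  refine le_trans (Finset.sum_le_card_nsmul _ _
      ((2*s/(N:ℝ))*D*(2*(2*s+2*D/(N:ℝ))/ρ^2)) ?_) ?_
  · intro ℓ hℓ
    have hmem := Finset.mem_Ioc.mp hℓ
    exact term_est N ℓ m s a ρ D hm hms hs (Nat.one_le_iff_ne_zero.mpr (by omega))
      (lt_of_le_of_lt hmem.2 hqN) hρ ha (hx ℓ hℓ) (hd ℓ hℓ)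
  · rw [hcard, nsmul_eq_mul]
    have : ((q - p : ℕ):ℝ) = (q:ℝ) - (p:ℝ) := by
      rw [Nat.cast_sub hpq]
    rw [this]

lemma sqrt_tendsto_atTop : Filter.Tendsto Real.sqrt atTop atTop := by
  apply tendsto_atTop_atTop.mpr
  intro b
  refine ⟨(max b 0)^2, fun a ha => ?_⟩
  have h1 : Real.sqrt ((max b 0)^2) ≤ Real.sqrt a := Real.sqrt_le_sqrt ha
  rw [Real.sqrt_sq (le_max_right b 0)] at h1
  exact le_trans (le_max_left b 0) h1

set_option maxHeartbeats 1000000 in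
lemma perN (N : ℕ) (m s K : ℝ) (hm : 0 < m) (hms : m < s) (hs : s < 1/2)
    (hN1 : 1 ≤ N)
    (hqN : |K| * sigN N m s + 1 < (N:ℝ)*(m/s))
    (hKσa : |K| * sigN N m s ≤ aN N m s)
    (hDN : (|K| * sigN N m s + 1)/(N:ℝ) ≤ (m/s)/2) :
    ⌊aN N m s + K*sigN N m s⌋₊ < N ∧
    |(UR N m s ⌊aN N m s + K*sigN N m s⌋₊ - UR N m s ⌊aN N m s⌋₊) - K^2| ≤
      (2*(2*s + 2*((|K| * sigN N m s + 1)/(N:ℝ)))/(m/s)^2) *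
        (2*((m/s)*K^2 + 3* |K| * (s*(sigN N m s/(N:ℝ))) + 2*(s*(1/(N:ℝ))))) +
      (2* |K| * (1/sigN N m s) + (1/sigN N m s)^2 + (1/sigN N m s)^2 +
        (|K| * (1/sigN N m s) + 2*(1/sigN N m s)^2)) := by
  have hs0 : 0 < s := hm.trans hms
  have hN0 : (0:ℝ) < N := by exact_mod_cast hN1
  have hNm0 : 0 < (N:ℝ)*m := by positivity
  have hρ0 : 0 < m/s := by positivity
  have hρ1 : m/s < 1 := (div_lt_one hs0).mpr hms
  set σ := sigN N m s with hσdef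
  have hσ2 : σ^2 = (N:ℝ)*m/s^2 := by
    rw [hσdef, sigN, mul_pow, Real.sq_sqrt hNm0.le]; ring
  have hσpos : 0 < σ := by
    rw [hσdef, sigN]
    have := Real.sqrt_pos.mpr hNm0
    positivity
  have hρσ : s*σ^2/(N:ℝ) = m/s := by rw [hσ2]; field_simp
  have hinv : s/((N:ℝ)*(m/s)) = 1/σ^2 := by
    rw [hσ2]; field_simp
  set A := aN N m s with hAdef
  have hA : A = (N:ℝ)*(1 - m/s) := by rw [hAdef, aN]
  have hA0 : 0 ≤ A := by rw [hA]; exact mul_nonneg hN0.le (by linarith)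
  clear_value σ A
  have hexp : (N:ℝ)*(1 - m/s) = (N:ℝ) - (N:ℝ)*(m/s) := by ring
  have hNρ0 : 0 < (N:ℝ)*(m/s) := by positivity
  have hKa : 0 ≤ |K| * σ := by positivity
  have hKσ : |K*σ| = |K| * σ := by rw [abs_mul, abs_of_pos hσpos]
  have hKσle : K*σ ≤ |K| * σ := by rw [← hKσ]; exact le_abs_self _
  have hKσge : -(|K| * σ) ≤ K*σ := by rw [← hKσ]; exact neg_abs_le _
  set n₂ := ⌊A + K*σ⌋₊ with hn₂def
  set n₁ := ⌊A⌋₊ with hn₁def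
  have h0AK : 0 ≤ A + K*σ := by linarith
  have hf2u : (n₂:ℝ) ≤ A + K*σ := Nat.floor_le h0AK
  have hf2l : A + K*σ - 1 < (n₂:ℝ) := Nat.sub_one_lt_floor _
  have hf1u : (n₁:ℝ) ≤ A := Nat.floor_le hA0
  have hf1l : A - 1 < (n₁:ℝ) := Nat.sub_one_lt_floor _
  have hpqmono : A ≤ A + K*σ → n₁ ≤ n₂ := fun h => Nat.floor_mono h
  have hpqmono' : A + K*σ ≤ A → n₂ ≤ n₁ := fun h => Nat.floor_mono h
  have hn₂N : n₂ < N := by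
    rw [hn₂def]
    apply (Nat.floor_lt h0AK).mpr
    rw [hA]; linarith
  have hn₁N : n₁ < N := by
    rw [hn₁def]
    apply (Nat.floor_lt hA0).mpr
    rw [hA]; linarith
  clear_value n₂ n₁
  refine ⟨hn₂N, ?_⟩
  set D := |K| * σ + 1 with hDdef
  set C := |K| * σ + 2 with hCdef
  have hD0 : 0 ≤ D := by rw [hDdef]; positivity
  have hDN' : D/(N:ℝ) ≤ (m/s)/2 := hDN
  have hB0 : 0 ≤ (2*s/(N:ℝ))*D*(2*(2*s+2*D/(N:ℝ))/(m/s)^2) := by positivity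
  have hσ2pos : 0 < σ^2 := by positivity
  -- floor square bounds (sign independent)
  have hq2 : |((n₂:ℝ)-A)^2 - K^2*σ^2| ≤ 2*(|K| * σ) + 1 := by
    have h1 : |((n₂:ℝ)-A) - K*σ| ≤ 1 := abs_le.mpr ⟨by linarith, by linarith⟩
    have h2 : |((n₂:ℝ)-A) + K*σ| ≤ 2*(|K| * σ) + 1 := by
      have he : ((n₂:ℝ)-A) + K*σ = (((n₂:ℝ)-A) - K*σ) + 2*(K*σ) := by ring
      rw [he]
      calc |(((n₂:ℝ)-A) - K*σ) + 2*(K*σ)| ≤ |((n₂:ℝ)-A) - K*σ| + |2*(K*σ)| :=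
            abs_add_le _ _
        _ ≤ 1 + 2*(|K| * σ) := by
            rw [abs_mul, hKσ]
            have : |(2:ℝ)| = 2 := by norm_num
            rw [this]; linarith
        _ = 2*(|K| * σ) + 1 := by ring
    have he : ((n₂:ℝ)-A)^2 - K^2*σ^2 = (((n₂:ℝ)-A) - K*σ)*(((n₂:ℝ)-A) + K*σ) := by
      ring
    rw [he, abs_mul]
    calc |((n₂:ℝ)-A) - K*σ| * |((n₂:ℝ)-A) + K*σ| ≤ 1 * (2*(|K| * σ) + 1) :=
          mul_le_mul h1 h2 (abs_nonneg _) zero_le_one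
      _ = 2*(|K| * σ) + 1 := by ring
  have hq1 : ((n₁:ℝ)-A)^2 ≤ 1 := by
    have h1 : |(n₁:ℝ)-A| ≤ 1 := abs_le.mpr ⟨by linarith, by linarith⟩
    calc ((n₁:ℝ)-A)^2 = |(n₁:ℝ)-A|^2 := (sq_abs _).symm
      _ ≤ 1^2 := by gcongr
      _ = 1 := one_pow 2
  rcases le_or_gt 0 K with hK | hK
  · -- K ≥ 0
    have hKabs : |K| = K := abs_of_nonneg hK
    have hKσ0 : 0 ≤ K*σ := mul_nonneg hK hσpos.le
    have hpq : n₁ ≤ n₂ := hpqmono (by linarith)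
    have hIoc : ∀ n : ℕ, Finset.Icc 1 n = Finset.Ioc 0 n := by
      intro n; ext x; simp only [Finset.mem_Icc, Finset.mem_Ioc]; omega
    have hsplit := Finset.sum_Ioc_consecutive
      (fun ℓ => Real.log (muR N m ℓ / lamR N s ℓ)) (Nat.zero_le n₁) hpq
    set S := ∑ ℓ ∈ Finset.Ioc n₁ n₂, Real.log (muR N m ℓ / lamR N s ℓ) with hSdef
    have hUdiff : UR N m s n₂ - UR N m s n₁ = S := by
      rw [UR, UR, hIoc, hIoc, ← hsplit]; ring
    have hd : ∀ ℓ ∈ Finset.Ioc n₁ n₂, |(ℓ:ℝ) - A| ≤ D := by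
      intro ℓ hℓ
      obtain ⟨h1, h2⟩ := Finset.mem_Ioc.mp hℓ
      have hc1 : (ℓ:ℝ) ≤ (n₂:ℝ) := Nat.cast_le.mpr h2
      have hc2 : (n₁:ℝ) + 1 ≤ (ℓ:ℝ) := by exact_mod_cast Nat.succ_le_of_lt h1
      rw [abs_le, hDdef]
      exact ⟨by linarith, by linarith⟩
    have hx : ∀ ℓ ∈ Finset.Ioc n₁ n₂, (m/s)/2 ≤ 1 - (ℓ:ℝ)/(N:ℝ) := by
      intro ℓ hℓ
      have hdl := (abs_le.mp (hd ℓ hℓ)).2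
      have hident : 1 - (ℓ:ℝ)/(N:ℝ) = m/s - ((ℓ:ℝ)-A)/(N:ℝ) := by
        rw [hA]; field_simp; ring
      have hdiv : ((ℓ:ℝ)-A)/(N:ℝ) ≤ D/(N:ℝ) := by gcongr
      rw [hident]; linarith
    set G := ((((n₂:ℝ)-A)^2 - ((n₁:ℝ)-A)^2) + ((n₂:ℝ)-(n₁:ℝ))) with hGdef
    have hkey := key N n₁ n₂ m s A (m/s) D hm hms hs.le hpq hn₂N rfl hA hx hd
    rw [hinv, ← hSdef, ← hGdef] at hkey
    have hcC : (n₂:ℝ)-(n₁:ℝ) ≤ C := by rw [hCdef]; linarith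
    have hSG : |S - 1/σ^2*G| ≤ C*((2*s/(N:ℝ))*D*(2*(2*s+2*D/(N:ℝ))/(m/s)^2)) :=
      le_trans hkey (mul_le_mul_of_nonneg_right hcC hB0)
    have hc0 : (0:ℝ) ≤ (n₂:ℝ)-(n₁:ℝ) := by
      have h := (Nat.cast_le (α := ℝ)).mpr hpq; linarith
    have hGK : |G - K^2*σ^2| ≤ (2*(|K| * σ) + 1) + 1 + C := by
      have h2 := abs_le.mp hq2
      have hsq := sq_nonneg ((n₁:ℝ)-A)
      rw [hGdef]
      exact abs_le.mpr ⟨by linarith, by linarith⟩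
    have hGdiv : |1/σ^2*G - K^2| ≤ ((2*(|K| * σ) + 1) + 1 + C)/σ^2 := by
      have heq : 1/σ^2*G - K^2 = (G - K^2*σ^2)/σ^2 := by field_simp
      rw [heq, abs_div, abs_of_pos hσ2pos]
      gcongr
    rw [hUdiff]
    calc |S - K^2| ≤ |S - 1/σ^2*G| + |1/σ^2*G - K^2| := abs_sub_le _ _ _
      _ ≤ C*((2*s/(N:ℝ))*D*(2*(2*s+2*D/(N:ℝ))/(m/s)^2))
          + ((2*(|K| * σ) + 1) + 1 + C)/σ^2 := add_le_add hSG hGdiv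
      _ = (2*(2*s + 2*((|K| * σ + 1)/(N:ℝ)))/(m/s)^2) *
            (2*((m/s)*K^2 + 3* |K| * (s*(σ/(N:ℝ))) + 2*(s*(1/(N:ℝ))))) +
          (2* |K| * (1/σ) + (1/σ)^2 + (1/σ)^2 +
            (|K| * (1/σ) + 2*(1/σ)^2)) := by
          rw [hCdef, hDdef]
          have hK2 : |K|^2 = K^2 := sq_abs K
          have hσinv : σ*σ⁻¹ = 1 := mul_inv_cancel₀ hσpos.ne'
          linear_combination (2*(2*s + 2*((|K| * σ + 1)/(N:ℝ)))/(m/s)^2) * (2*K^2) * hρσ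
            + (2*(2*s + 2*((|K| * σ + 1)/(N:ℝ)))/(m/s)^2) * (2*(s*σ^2/(N:ℝ))) * hK2
            + (3* |K| * σ⁻¹) * hσinv
  · -- K < 0
    have hKabs : |K| = -K := abs_of_neg hK
    have hKσ0 : K*σ ≤ 0 := (mul_neg_of_neg_of_pos hK hσpos).le
    have hpq : n₂ ≤ n₁ := hpqmono' (by linarith)
    have hIoc : ∀ n : ℕ, Finset.Icc 1 n = Finset.Ioc 0 n := by
      intro n; ext x; simp only [Finset.mem_Icc, Finset.mem_Ioc]; omega
    have hsplit := Finset.sum_Ioc_consecutive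
      (fun ℓ => Real.log (muR N m ℓ / lamR N s ℓ)) (Nat.zero_le n₂) hpq
    set S := ∑ ℓ ∈ Finset.Ioc n₂ n₁, Real.log (muR N m ℓ / lamR N s ℓ) with hSdef
    have hUdiff : UR N m s n₂ - UR N m s n₁ = -S := by
      rw [UR, UR, hIoc, hIoc, ← hsplit]; ring
    have hd : ∀ ℓ ∈ Finset.Ioc n₂ n₁, |(ℓ:ℝ) - A| ≤ D := by
      intro ℓ hℓ
      obtain ⟨h1, h2⟩ := Finset.mem_Ioc.mp hℓ
      have hc1 : (ℓ:ℝ) ≤ (n₁:ℝ) := Nat.cast_le.mpr h2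
      have hc2 : (n₂:ℝ) + 1 ≤ (ℓ:ℝ) := by exact_mod_cast Nat.succ_le_of_lt h1
      rw [abs_le, hDdef]
      exact ⟨by linarith, by linarith⟩
    have hx : ∀ ℓ ∈ Finset.Ioc n₂ n₁, (m/s)/2 ≤ 1 - (ℓ:ℝ)/(N:ℝ) := by
      intro ℓ hℓ
      have hdl := (abs_le.mp (hd ℓ hℓ)).2
      have hident : 1 - (ℓ:ℝ)/(N:ℝ) = m/s - ((ℓ:ℝ)-A)/(N:ℝ) := by
        rw [hA]; field_simp; ring
      have hdiv : ((ℓ:ℝ)-A)/(N:ℝ) ≤ D/(N:ℝ) := by gcongr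
      rw [hident]; linarith
    set G := ((((n₁:ℝ)-A)^2 - ((n₂:ℝ)-A)^2) + ((n₁:ℝ)-(n₂:ℝ))) with hGdef
    have hkey := key N n₂ n₁ m s A (m/s) D hm hms hs.le hpq hn₁N rfl hA hx hd
    rw [hinv, ← hSdef, ← hGdef] at hkey
    have hcC : (n₁:ℝ)-(n₂:ℝ) ≤ C := by rw [hCdef]; linarith
    have hSG : |S - 1/σ^2*G| ≤ C*((2*s/(N:ℝ))*D*(2*(2*s+2*D/(N:ℝ))/(m/s)^2)) :=
      le_trans hkey (mul_le_mul_of_nonneg_right hcC hB0)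
    have hc0 : (0:ℝ) ≤ (n₁:ℝ)-(n₂:ℝ) := by
      have h := (Nat.cast_le (α := ℝ)).mpr hpq; linarith
    have hGK : |G + K^2*σ^2| ≤ (2*(|K| * σ) + 1) + 1 + C := by
      have h2 := abs_le.mp hq2
      have hsq := sq_nonneg ((n₁:ℝ)-A)
      rw [hGdef]
      exact abs_le.mpr ⟨by linarith, by linarith⟩
    have hGdiv : |1/σ^2*G + K^2| ≤ ((2*(|K| * σ) + 1) + 1 + C)/σ^2 := by
      have heq : 1/σ^2*G + K^2 = (G + K^2*σ^2)/σ^2 := by field_simp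
      rw [heq, abs_div, abs_of_pos hσ2pos]
      gcongr
    rw [hUdiff]
    calc |-S - K^2| = |S + K^2| := by rw [show -S - K^2 = -(S + K^2) by ring, abs_neg]
      _ = |(S - 1/σ^2*G) + (1/σ^2*G + K^2)| := by rw [show S + K^2 = (S - 1/σ^2*G) + (1/σ^2*G + K^2) by ring]
      _ ≤ |S - 1/σ^2*G| + |1/σ^2*G + K^2| := abs_add_le _ _
      _ ≤ C*((2*s/(N:ℝ))*D*(2*(2*s+2*D/(N:ℝ))/(m/s)^2))
          + ((2*(|K| * σ) + 1) + 1 + C)/σ^2 := add_le_add hSG hGdiv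
      _ = (2*(2*s + 2*((|K| * σ + 1)/(N:ℝ)))/(m/s)^2) *
            (2*((m/s)*K^2 + 3* |K| * (s*(σ/(N:ℝ))) + 2*(s*(1/(N:ℝ))))) +
          (2* |K| * (1/σ) + (1/σ)^2 + (1/σ)^2 +
            (|K| * (1/σ) + 2*(1/σ)^2)) := by
          rw [hCdef, hDdef]
          have hK2 : |K|^2 = K^2 := sq_abs K
          have hσinv : σ*σ⁻¹ = 1 := mul_inv_cancel₀ hσpos.ne'
          linear_combination (2*(2*s + 2*((|K| * σ + 1)/(N:ℝ)))/(m/s)^2) * (2*K^2) * hρσ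
            + (2*(2*s + 2*((|K| * σ + 1)/(N:ℝ)))/(m/s)^2) * (2*(s*σ^2/(N:ℝ))) * hK2
            + (3* |K| * σ⁻¹) * hσinv

theorem stmt10 (m s : ℕ → ℝ)
    (hms : ∀ N, 0 < m N ∧ m N < s N)
    (hNm : Filter.Tendsto (fun N : ℕ => (N:ℝ) * m N) Filter.atTop Filter.atTop)
    (hs0 : Filter.Tendsto s Filter.atTop (nhds 0))
    (hρlim : ∃ ρs ∈ Set.Ioc (0:ℝ) 1,
      Filter.Tendsto (fun N => m N / s N) Filter.atTop (nhds ρs))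
    (hu : Filter.Tendsto (fun N : ℕ => uN N (m N) (s N)) Filter.atTop Filter.atTop)
    (K : ℝ) :
    (∀ᶠ N : ℕ in Filter.atTop,
      ⌊aN N (m N) (s N) + K * sigN N (m N) (s N)⌋₊ < N) ∧
    Filter.Tendsto (fun N : ℕ =>
      UR N (m N) (s N) ⌊aN N (m N) (s N) + K * sigN N (m N) (s N)⌋₊
        - UR N (m N) (s N) ⌊aN N (m N) (s N)⌋₊)
      Filter.atTop (nhds (K^2)) := by
  obtain ⟨ρs, hρsmem, hρt⟩ := hρlim
  obtain ⟨hρs0, hρs1⟩ := hρsmem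
  have hm0 : ∀ N, 0 < m N := fun N => (hms N).1
  have hmsN : ∀ N, m N < s N := fun N => (hms N).2
  have hs0N : ∀ N, 0 < s N := fun N => (hm0 N).trans (hmsN N)
  have t_sqrt : Tendsto (fun N : ℕ => Real.sqrt ((N:ℝ)*m N)) atTop atTop :=
    sqrt_tendsto_atTop.comp hNm
  have t_invsqrt : Tendsto (fun N : ℕ => (Real.sqrt ((N:ℝ)*m N))⁻¹) atTop (nhds 0) :=
    t_sqrt.inv_tendsto_atTop
  have ev_s : ∀ᶠ N in atTop, s N < 1/2 := hs0.eventually_lt_const (by norm_num)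
  have ev_N1 : ∀ᶠ N : ℕ in atTop, 1 ≤ N := eventually_ge_atTop 1
  have hσnonneg : ∀ N, 0 ≤ sigN N (m N) (s N) := fun N => by
    rw [sigN]
    have := (hs0N N).le
    positivity
  have t_σ : Tendsto (fun N => sigN N (m N) (s N)) atTop atTop := by
    apply tendsto_atTop_mono' atTop ?_ t_sqrt
    filter_upwards [ev_s] with N h1
    rw [sigN]
    have h2 : (1:ℝ) ≤ 1/s N := one_le_one_div (hs0N N) (by linarith)
    nlinarith [Real.sqrt_nonneg ((N:ℝ)*m N)]
  have t_invσ : Tendsto (fun N => 1/sigN N (m N) (s N)) atTop (nhds 0) := by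
    exact t_σ.inv_tendsto_atTop.congr (fun N => by simp [one_div])
  have t_σN : Tendsto (fun N => sigN N (m N) (s N)/(N:ℝ)) atTop (nhds 0) := by
    apply squeeze_zero' ?_ ?_ t_invsqrt
    · filter_upwards with N
      exact div_nonneg (hσnonneg N) (by positivity)
    · filter_upwards [ev_N1] with N h1
      have hN0 : (0:ℝ) < N := by exact_mod_cast h1
      have hNm0 : 0 < (N:ℝ)*m N := mul_pos hN0 (hm0 N)
      have hsq0 : 0 < Real.sqrt ((N:ℝ)*m N) := Real.sqrt_pos.mpr hNm0
      rw [inv_eq_one_div, div_le_div_iff₀ hN0 hsq0, sigN]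
      have hmul : (1/s N)*Real.sqrt ((N:ℝ)*m N)*Real.sqrt ((N:ℝ)*m N)
          = ((N:ℝ)*m N)/s N := by
        rw [mul_assoc, Real.mul_self_sqrt hNm0.le]; ring
      rw [hmul, div_le_iff₀ (hs0N N)]
      nlinarith [hmsN N]
  have t_sσN : Tendsto (fun N => s N*(sigN N (m N) (s N)/(N:ℝ))) atTop (nhds 0) := by
    apply squeeze_zero' ?_ ?_ t_σN
    · filter_upwards with N
      exact mul_nonneg (hs0N N).le (div_nonneg (hσnonneg N) (by positivity))
    · filter_upwards [ev_s] with N h1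
      have h2 : 0 ≤ sigN N (m N) (s N)/(N:ℝ) := div_nonneg (hσnonneg N) (by positivity)
      nlinarith
  have t_invN : Tendsto (fun N : ℕ => 1/(N:ℝ)) atTop (nhds 0) :=
    tendsto_one_div_atTop_nhds_zero_nat
  have t_sN : Tendsto (fun N => s N*(1/(N:ℝ))) atTop (nhds 0) := by
    simpa using hs0.mul t_invN
  have t_DN : Tendsto (fun N => (|K| * sigN N (m N) (s N) + 1)/(N:ℝ)) atTop (nhds 0) := by
    have heq : (fun N : ℕ => (|K| * sigN N (m N) (s N) + 1)/(N:ℝ))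
        = fun N => |K| * (sigN N (m N) (s N)/(N:ℝ)) + 1/(N:ℝ) := by
      funext N; ring
    rw [heq]
    simpa using (t_σN.const_mul |K|).add t_invN
  have t_Nρ : Tendsto (fun N : ℕ => (N:ℝ)*(m N/s N)) atTop atTop := by
    apply tendsto_atTop_mono' atTop ?_ hNm
    filter_upwards [ev_s] with N h1
    have h2 : m N ≤ m N/s N := by
      rw [le_div_iff₀ (hs0N N)]; nlinarith [hm0 N]
    exact mul_le_mul_of_nonneg_left h2 (Nat.cast_nonneg N)
  have t_invNρ : Tendsto (fun N : ℕ => ((N:ℝ)*(m N/s N))⁻¹) atTop (nhds 0) :=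
    t_Nρ.inv_tendsto_atTop
  have t_σNρ : Tendsto (fun N => sigN N (m N) (s N)/((N:ℝ)*(m N/s N))) atTop (nhds 0) := by
    apply Tendsto.congr' ?_ t_invsqrt
    filter_upwards [ev_N1] with N h1
    have hN0 : (0:ℝ) < N := by exact_mod_cast h1
    have hNm0 : 0 < (N:ℝ)*m N := mul_pos hN0 (hm0 N)
    have hsq0 : 0 < Real.sqrt ((N:ℝ)*m N) := Real.sqrt_pos.mpr hNm0
    have hNρ0 : 0 < (N:ℝ)*(m N/s N) := by
      have := hm0 N; have := hs0N N; positivity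
    rw [sigN, eq_div_iff (ne_of_gt hNρ0)]
    have h := Real.mul_self_sqrt hNm0.le
    generalize hg : Real.sqrt ((N:ℝ)*m N) = t at h hsq0 ⊢
    have h2 : (N:ℝ)*(m N/s N) = (t*t)/s N := by
      rw [h]; ring
    rw [h2]
    field_simp
  have ev_ratio : ∀ᶠ N in atTop,
      (|K| * sigN N (m N) (s N) + 1)/((N:ℝ)*(m N/s N)) < 1 := by
    have heq : (fun N : ℕ => (|K| * sigN N (m N) (s N) + 1)/((N:ℝ)*(m N/s N)))
        = fun N => |K| * (sigN N (m N) (s N)/((N:ℝ)*(m N/s N))) + ((N:ℝ)*(m N/s N))⁻¹ := by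
      funext N; ring
    have t_r : Tendsto (fun N : ℕ => (|K| * sigN N (m N) (s N) + 1)/((N:ℝ)*(m N/s N)))
        atTop (nhds 0) := by
      rw [heq]; simpa using (t_σNρ.const_mul |K|).add t_invNρ
    exact t_r.eventually_lt_const one_pos
  have ev_qN : ∀ᶠ N in atTop,
      |K| * sigN N (m N) (s N) + 1 < (N:ℝ)*(m N/s N) := by
    filter_upwards [ev_ratio, ev_N1] with N h1 h2
    have hN0 : (0:ℝ) < N := by exact_mod_cast h2
    have hNρ0 : 0 < (N:ℝ)*(m N/s N) := by
      have := hm0 N; have := hs0N N; positivity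
    exact (div_lt_one hNρ0).mp h1
  have t_invsqrtu : Tendsto (fun N => (Real.sqrt (uN N (m N) (s N)))⁻¹) atTop (nhds 0) :=
    (sqrt_tendsto_atTop.comp hu).inv_tendsto_atTop
  have t_σa : Tendsto (fun N => sigN N (m N) (s N)/aN N (m N) (s N)) atTop (nhds 0) := by
    apply squeeze_zero' ?_ ?_ t_invsqrtu
    · filter_upwards with N
      have hρ1 : m N/s N < 1 := (div_lt_one (hs0N N)).mpr (hmsN N)
      exact div_nonneg (hσnonneg N) (by rw [aN]; exact mul_nonneg (Nat.cast_nonneg N) (by linarith))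
    · filter_upwards [ev_N1] with N h1
      have hN0 : (0:ℝ) < N := by exact_mod_cast h1
      have hNm0 : 0 < (N:ℝ)*m N := mul_pos hN0 (hm0 N)
      have hρ1 : m N/s N < 1 := (div_lt_one (hs0N N)).mpr (hmsN N)
      have ha0 : 0 < aN N (m N) (s N) := by
        rw [aN]; exact mul_pos hN0 (by linarith)
      have hu0 : 0 < uN N (m N) (s N) := by
        rw [uN]; exact mul_pos hNm0 (pow_pos (by linarith) 2)
      have hsqu0 : 0 < Real.sqrt (uN N (m N) (s N)) := Real.sqrt_pos.mpr hu0
      rw [inv_eq_one_div, div_le_div_iff₀ ha0 hsqu0]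
      have hsqu : Real.sqrt (uN N (m N) (s N))
          = Real.sqrt ((N:ℝ)*m N) * (1 - m N/s N) := by
        rw [uN, Real.sqrt_mul hNm0.le, Real.sqrt_sq (by linarith)]
      rw [hsqu, sigN, aN]
      have h := Real.mul_self_sqrt hNm0.le
      have hNms : (N:ℝ)*m N/s N ≤ (N:ℝ) := by
        rw [div_le_iff₀ (hs0N N)]; nlinarith [hmsN N]
      calc (1/s N)*Real.sqrt ((N:ℝ)*m N)*(Real.sqrt ((N:ℝ)*m N)*(1 - m N/s N))
          = ((N:ℝ)*m N/s N)*(1 - m N/s N) := by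
            rw [show (1/s N)*Real.sqrt ((N:ℝ)*m N)*(Real.sqrt ((N:ℝ)*m N)*(1 - m N/s N))
              = (Real.sqrt ((N:ℝ)*m N)*Real.sqrt ((N:ℝ)*m N))*(1/s N)*(1 - m N/s N) by ring, h]
            ring
        _ ≤ (N:ℝ)*(1 - m N/s N) := by
            apply mul_le_mul_of_nonneg_right hNms (by linarith)
        _ = 1*((N:ℝ)*(1 - m N/s N)) := by ring
  have ev_Kσa : ∀ᶠ N in atTop, |K| * sigN N (m N) (s N) ≤ aN N (m N) (s N) := by
    have hpos : (0:ℝ) < 1/(|K|+1) := by positivity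
    filter_upwards [t_σa.eventually_lt_const hpos, ev_N1] with N h1 h2
    have hN0 : (0:ℝ) < N := by exact_mod_cast h2
    have hρ1 : m N/s N < 1 := (div_lt_one (hs0N N)).mpr (hmsN N)
    have ha0 : 0 < aN N (m N) (s N) := by
      rw [aN]; exact mul_pos hN0 (by linarith)
    rw [div_lt_div_iff₀ ha0 (by positivity : (0:ℝ) < |K|+1)] at h1
    nlinarith [hσnonneg N, abs_nonneg K]
  have ev_ρ : ∀ᶠ N in atTop, ρs/2 < m N/s N :=
    hρt.eventually_const_lt (by linarith)
  have ev_DN : ∀ᶠ N in atTop,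
      (|K| * sigN N (m N) (s N) + 1)/(N:ℝ) ≤ (m N/s N)/2 := by
    filter_upwards [t_DN.eventually_lt_const (show (0:ℝ) < ρs/4 by linarith), ev_ρ]
      with N h1 h2
    linarith
  -- the error sequence
  set e : ℕ → ℝ := fun N =>
      (2*(2*s N + 2*((|K| * sigN N (m N) (s N) + 1)/(N:ℝ)))/(m N/s N)^2) *
        (2*((m N/s N)*K^2 + 3* |K| * (s N*(sigN N (m N) (s N)/(N:ℝ))) + 2*(s N*(1/(N:ℝ))))) +
      (2* |K| * (1/sigN N (m N) (s N)) + (1/sigN N (m N) (s N))^2 + (1/sigN N (m N) (s N))^2 +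
        (|K| * (1/sigN N (m N) (s N)) + 2*(1/sigN N (m N) (s N))^2)) with hedef
  have t_e : Tendsto e atTop (nhds 0) := by
    have h1 : Tendsto (fun N => 2*(2*s N + 2*((|K| * sigN N (m N) (s N) + 1)/(N:ℝ))))
        atTop (nhds 0) := by
      simpa using ((hs0.const_mul (2:ℝ)).add (t_DN.const_mul (2:ℝ))).const_mul (2:ℝ)
    have h2 : Tendsto (fun N => (m N/s N)*K^2 + 3* |K| * (s N*(sigN N (m N) (s N)/(N:ℝ)))
        + 2*(s N*(1/(N:ℝ)))) atTop (nhds (ρs*K^2)) := by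
      have := ((hρt.mul_const (K^2)).add (t_sσN.const_mul (3* |K|))).add (t_sN.const_mul 2)
      simpa using this
    have h3 : Tendsto (fun N => 2* |K| * (1/sigN N (m N) (s N)) + (1/sigN N (m N) (s N))^2
        + (1/sigN N (m N) (s N))^2 + (|K| * (1/sigN N (m N) (s N))
        + 2*(1/sigN N (m N) (s N))^2)) atTop (nhds 0) := by
      have := (((t_invσ.const_mul (2* |K|)).add (t_invσ.pow 2)).add (t_invσ.pow 2)).add
        ((t_invσ.const_mul |K|).add ((t_invσ.pow 2).const_mul 2))
      simpa using this
    have hcomb := ((h1.div (hρt.pow 2) (pow_ne_zero 2 hρs0.ne')).mul (h2.const_mul 2)).add h3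
    rw [hedef]
    simpa using hcomb
  have hfinal : ∀ᶠ N in atTop,
      ⌊aN N (m N) (s N) + K * sigN N (m N) (s N)⌋₊ < N ∧
      |(UR N (m N) (s N) ⌊aN N (m N) (s N) + K * sigN N (m N) (s N)⌋₊
        - UR N (m N) (s N) ⌊aN N (m N) (s N)⌋₊) - K^2| ≤ e N := by
    filter_upwards [ev_s, ev_N1, ev_qN, ev_Kσa, ev_DN] with N h1 h2 h3 h4 h5
    exact perN N (m N) (s N) K (hm0 N) (hmsN N) h1 h2 h3 h4 h5
  refine ⟨hfinal.mono fun N h => h.1, ?_⟩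
  rw [← tendsto_sub_nhds_zero_iff]
  apply squeeze_zero_norm' ?_ t_e
  filter_upwards [hfinal] with N h
  simpa [Real.norm_eq_abs] using h.2
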